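/- Monotone limit of the distinct-outlier exponent: for probability distributions μ ≠ π on a finite alphabet with full support, the sequence m ↦ inf_p [D(μ‖p) + m·D(π‖p)] is nondecreasing, bounded above by D(μ‖π), and its supremum over m ∈ ℕ equals D(μ‖π). -/

import Mathlib

open Finset
open scoped Classical

/-- `p` is a probability mass function on the finite alphabet `Y`. -/
def IsPMF {Y : Type*} [Fintype Y] (p : Y → ℝ) : Prop :=
  (∀ y, 0 ≤ p y) ∧ ∑ y, p y = 1

/-- Relative entropy (KL divergence), with the convention `0 log 0 = 0`
(automatic since `0 * log _ = 0` in `ℝ`). -/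
noncomputable def KL {Y : Type*} [Fintype Y] (p q : Y → ℝ) : ℝ :=
  ∑ y, p y * Real.log (p y / q y)

/-!
Writing `a = √p` and `b = √π`, the bound `log x ≤ x - 1` applied to `a / b` gives both
`Σ (√p - √π)² ≤ D(π‖p)` and `μ log (p / π) ≤ 2 (μ / b) (a - b) ≤ m (a - b)² + μ² / (m π)`.
Summing, `D(μ‖π) - D(μ‖p) ≤ m D(π‖p) + c / m` with `c = Σ μ² / π`, so the infimum at `m` lies
in `[D(μ‖π) - c / m, D(μ‖π)]` (the upper end from `p = π`), and it increases with `m` because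
`D(π‖p) ≥ 0`.
-/

section Pointwise

variable {a b : ℝ}

lemma log_sq_div_sq_le (ha : 0 < a) (hb : 0 < b) :
    Real.log (a ^ 2 / b ^ 2) ≤ 2 * (a / b - 1) := by
  rw [← div_pow, Real.log_pow]
  push_cast
  linarith [Real.log_le_sub_one_of_pos (div_pos ha hb)]

lemma sq_sub_le_mul_log_add (ha : 0 < a) (hb : 0 < b) :
    (a - b) ^ 2 ≤ b ^ 2 * Real.log (b ^ 2 / a ^ 2) + (a ^ 2 - b ^ 2) := by
  have hlog : Real.log (b ^ 2 / a ^ 2) = -Real.log (a ^ 2 / b ^ 2) := by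
    rw [← Real.log_inv, inv_div]
  have key := mul_le_mul_of_nonneg_left (log_sq_div_sq_le ha hb) (sq_nonneg b)
  have hexpand : b ^ 2 * (2 * (a / b - 1)) = 2 * a * b - 2 * b ^ 2 := by
    field_simp
  rw [hlog]
  linarith

lemma mul_log_sq_div_sq_le {w m : ℝ} (hw : 0 ≤ w) (hm : 0 < m) (ha : 0 < a) (hb : 0 < b) :
    w * Real.log (a ^ 2 / b ^ 2) ≤ m * (a - b) ^ 2 + w ^ 2 / (m * b ^ 2) := by
  have h₁ := mul_le_mul_of_nonneg_left (log_sq_div_sq_le ha hb) hw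
  -- AM-GM: `2 x y ≤ m y² + x² / m` with `x = w / b`, `y = a - b`
  have h₂ : 2 * w * (a / b - 1) ≤ m * (a - b) ^ 2 + w ^ 2 / (m * b ^ 2) := by
    have h : m * (a - b) ^ 2 + w ^ 2 / (m * b ^ 2) - 2 * w * (a / b - 1)
        = (m * b * (a - b) - w) ^ 2 / (m * b ^ 2) := by
      field_simp
      ring
    have : 0 ≤ (m * b * (a - b) - w) ^ 2 / (m * b ^ 2) := by positivity
    linarith
  linarith

end Pointwise

section Divergence

variable {Y : Type*} [Fintype Y]

lemma KL_self {p : Y → ℝ} (hp : ∀ y, 0 < p y) : KL p p = 0 :=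
  Finset.sum_eq_zero fun y _ => by rw [div_self (hp y).ne', Real.log_one, mul_zero]

lemma sum_sq_sqrt_sub_sqrt_le_KL {p q : Y → ℝ} (hp : IsPMF p) (hq : IsPMF q)
    (hppos : ∀ y, 0 < p y) (hqpos : ∀ y, 0 < q y) :
    ∑ y, (√(p y) - √(q y)) ^ 2 ≤ KL q p := by
  have h y := sq_sub_le_mul_log_add (Real.sqrt_pos.2 (hppos y)) (Real.sqrt_pos.2 (hqpos y))
  simp only [Real.sq_sqrt (hppos _).le, Real.sq_sqrt (hqpos _).le] at h
  calc ∑ y, (√(p y) - √(q y)) ^ 2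
      ≤ ∑ y, (q y * Real.log (q y / p y) + (p y - q y)) := Finset.sum_le_sum fun y _ => h y
    _ = KL q p := by rw [Finset.sum_add_distrib, Finset.sum_sub_distrib, hp.2, hq.2]; simp [KL]

lemma KL_nonneg {p q : Y → ℝ} (hp : IsPMF p) (hq : IsPMF q)
    (hppos : ∀ y, 0 < p y) (hqpos : ∀ y, 0 < q y) : 0 ≤ KL q p :=
  (Finset.sum_nonneg fun _ _ => sq_nonneg _).trans (sum_sq_sqrt_sub_sqrt_le_KL hp hq hppos hqpos)

lemma KL_sub_KL {μ π p : Y → ℝ} (hμ : ∀ y, 0 < μ y) (hπ : ∀ y, 0 < π y) (hp : ∀ y, 0 < p y) :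
    KL μ π - KL μ p = ∑ y, μ y * Real.log (p y / π y) := by
  rw [KL, KL, ← Finset.sum_sub_distrib]
  refine Finset.sum_congr rfl fun y _ => ?_
  have := hμ y
  have := hπ y
  have := hp y
  rw [← mul_sub, ← Real.log_div (by positivity) (by positivity)]
  congr 2
  field_simp

lemma KL_sub_KL_le {μ π p : Y → ℝ} (hπ : IsPMF π) (hp : IsPMF p) (hμpos : ∀ y, 0 < μ y)
    (hπpos : ∀ y, 0 < π y) (hppos : ∀ y, 0 < p y) {m : ℝ} (hm : 0 < m) :
    KL μ π - KL μ p ≤ m * KL π p + (∑ y, μ y ^ 2 / π y) / m := by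
  have h y := mul_log_sq_div_sq_le (hμpos y).le hm
    (Real.sqrt_pos.2 (hppos y)) (Real.sqrt_pos.2 (hπpos y))
  simp only [Real.sq_sqrt (hppos _).le, Real.sq_sqrt (hπpos _).le] at h
  calc KL μ π - KL μ p = ∑ y, μ y * Real.log (p y / π y) := KL_sub_KL hμpos hπpos hppos
    _ ≤ ∑ y, (m * (√(p y) - √(π y)) ^ 2 + μ y ^ 2 / (m * π y)) :=
        Finset.sum_le_sum fun y _ => h y
    _ = m * ∑ y, (√(p y) - √(π y)) ^ 2 + (∑ y, μ y ^ 2 / π y) / m := by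
        rw [Finset.sum_add_distrib, Finset.mul_sum, Finset.sum_div]
        congr 1
        exact Finset.sum_congr rfl fun y _ => by rw [mul_comm m, div_mul_eq_div_div]
    _ ≤ m * KL π p + (∑ y, μ y ^ 2 / π y) / m := by
        gcongr
        exact sum_sq_sqrt_sub_sqrt_le_KL hp hπ hppos hπpos

end Divergence

section Exponent

variable {Y : Type*} [Fintype Y] {μ π : Y → ℝ}

noncomputable def etaBar (μ π : Y → ℝ) (m : ℕ) : ℝ :=
  sInf {x : ℝ | ∃ p : Y → ℝ, IsPMF p ∧ (∀ y, 0 < p y) ∧ x = KL μ p + (m : ℝ) * KL π p}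

lemma etaBar_le_of_mem (hμ : IsPMF μ) (hπ : IsPMF π) (hμpos : ∀ y, 0 < μ y)
    (hπpos : ∀ y, 0 < π y) (m : ℕ) {p : Y → ℝ} (hp : IsPMF p) (hppos : ∀ y, 0 < p y) :
    etaBar μ π m ≤ KL μ p + m * KL π p := by
  refine csInf_le ⟨0, ?_⟩ ⟨p, hp, hppos, rfl⟩
  rintro x ⟨q, hq, hqpos, rfl⟩
  have := KL_nonneg hq hμ hqpos hμpos
  have := KL_nonneg hq hπ hqpos hπpos
  positivity

lemma etaBar_le_KL (hμ : IsPMF μ) (hπ : IsPMF π) (hμpos : ∀ y, 0 < μ y)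
    (hπpos : ∀ y, 0 < π y) (m : ℕ) : etaBar μ π m ≤ KL μ π := by
  simpa [KL_self hπpos] using etaBar_le_of_mem hμ hπ hμpos hπpos m hπ hπpos

lemma monotone_etaBar (hμ : IsPMF μ) (hπ : IsPMF π) (hμpos : ∀ y, 0 < μ y)
    (hπpos : ∀ y, 0 < π y) : Monotone (etaBar μ π) := by
  intro a b hab
  refine le_csInf ⟨_, π, hπ, hπpos, rfl⟩ ?_
  rintro x ⟨p, hp, hppos, rfl⟩
  calc etaBar μ π a ≤ KL μ p + a * KL π p := etaBar_le_of_mem hμ hπ hμpos hπpos a hp hppos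
    _ ≤ KL μ p + b * KL π p := by
        gcongr
        exact KL_nonneg hp hπ hppos hπpos

lemma KL_sub_div_le_etaBar (hπ : IsPMF π) (hμpos : ∀ y, 0 < μ y) (hπpos : ∀ y, 0 < π y)
    {m : ℕ} (hm : 0 < m) : KL μ π - (∑ y, μ y ^ 2 / π y) / m ≤ etaBar μ π m := by
  refine le_csInf ⟨_, π, hπ, hπpos, rfl⟩ ?_
  rintro x ⟨p, hp, hppos, rfl⟩
  linarith [KL_sub_KL_le hπ hp hμpos hπpos hppos (Nat.cast_pos.2 hm)]

lemma iSup_etaBar (hμ : IsPMF μ) (hπ : IsPMF π) (hμpos : ∀ y, 0 < μ y)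
    (hπpos : ∀ y, 0 < π y) : ⨆ m, etaBar μ π m = KL μ π := by
  refine le_antisymm (ciSup_le (etaBar_le_KL hμ hπ hμpos hπpos)) ?_
  refine le_of_forall_pos_lt_add fun ε hε => ?_
  set c := ∑ y, μ y ^ 2 / π y
  have hc : 0 ≤ c := Finset.sum_nonneg fun y _ => by have := hπpos y; positivity
  obtain ⟨m, hm⟩ := exists_nat_gt (c / ε)
  have hm₀ : (0 : ℝ) < m := (div_nonneg hc hε.le).trans_lt hm
  have hcm : c / m < ε := (div_lt_iff₀ hm₀).2 (by rwa [div_lt_iff₀ hε, mul_comm] at hm)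
  have hbdd : BddAbove (Set.range (etaBar μ π)) :=
    ⟨KL μ π, Set.forall_mem_range.2 (etaBar_le_KL hμ hπ hμpos hπpos)⟩
  linarith [KL_sub_div_le_etaBar hπ hμpos hπpos (Nat.cast_pos.1 hm₀), le_ciSup hbdd m]

end Exponent

theorem etaBar_monotone_sup_general {Y : Type*} [Fintype Y] (μ π : Y → ℝ)
    (hμ : IsPMF μ) (hπ : IsPMF π) (hμpos : ∀ y, 0 < μ y) (hπpos : ∀ y, 0 < π y) :
    Monotone (fun m : ℕ => sInf {x : ℝ | ∃ p : Y → ℝ, IsPMF p ∧ (∀ y, 0 < p y) ∧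
        x = KL μ p + (m : ℝ) * KL π p}) ∧
    (∀ m : ℕ, sInf {x : ℝ | ∃ p : Y → ℝ, IsPMF p ∧ (∀ y, 0 < p y) ∧
        x = KL μ p + (m : ℝ) * KL π p} ≤ KL μ π) ∧
    (⨆ m : ℕ, sInf {x : ℝ | ∃ p : Y → ℝ, IsPMF p ∧ (∀ y, 0 < p y) ∧
        x = KL μ p + (m : ℝ) * KL π p}) = KL μ π :=
  ⟨monotone_etaBar hμ hπ hμpos hπpos, etaBar_le_KL hμ hπ hμpos hπpos,
    iSup_etaBar hμ hπ hμpos hπpos⟩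

theorem etaBar_monotone_sup {Y : Type*} [Fintype Y] (μ π : Y → ℝ)
    (hμ : IsPMF μ) (hπ : IsPMF π) (hμpos : ∀ y, 0 < μ y) (hπpos : ∀ y, 0 < π y)
    (hne : μ ≠ π) :
    Monotone (fun m : ℕ => sInf {x : ℝ | ∃ p : Y → ℝ, IsPMF p ∧ (∀ y, 0 < p y) ∧
        x = KL μ p + (m : ℝ) * KL π p}) ∧
    (∀ m : ℕ, sInf {x : ℝ | ∃ p : Y → ℝ, IsPMF p ∧ (∀ y, 0 < p y) ∧
        x = KL μ p + (m : ℝ) * KL π p} ≤ KL μ π) ∧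
    (⨆ m : ℕ, sInf {x : ℝ | ∃ p : Y → ℝ, IsPMF p ∧ (∀ y, 0 < p y) ∧
        x = KL μ p + (m : ℝ) * KL π p}) = KL μ π :=
  etaBar_monotone_sup_general μ π hμ hπ hμpos hπpos
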